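/- arXiv:1108.2765 — 2 statements merged into one kernel-verified Lean document; each statement's English description precedes it below -/
import Mathlib

section
/- Let E be a real normed vector space, V a subset of E, and X : E → E a map (a vector field). Let f, h, α : E → ℝ be differentiable at every point of V, with 0 ≤ α(x) ≤ 1 for all x ∈ V. Let c > 0 and m ≥ 0, and assume that at every point x ∈ V: fderiv ℝ f x (X x) > c, fderiv ℝ h x (X x) > c, |fderiv ℝ α x (X x)| ≤ m, and m·|f(x) − h(x)| < c/2. Then the function g := α·f + (1 − α)·h is differentiable at every point of V and satisfies fderiv ℝ g x (X x) > c/2 for every x ∈ V. -/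
/-- The interpolation estimate in the proof of Lemma 2.3: the cutoff
interpolation `g = α f + (1-α) h` keeps the pseudo-gradient inequality. -/
theorem interpolation_pseudo_gradient
    {E : Type*} [NormedAddCommGroup E] [NormedSpace ℝ E]
    (V : Set E) (X : E → E) (f h α : E → ℝ)
    (hf : ∀ x ∈ V, DifferentiableAt ℝ f x)
    (hh : ∀ x ∈ V, DifferentiableAt ℝ h x)
    (hα : ∀ x ∈ V, DifferentiableAt ℝ α x)
    (hα01 : ∀ x ∈ V, 0 ≤ α x ∧ α x ≤ 1)
    (c m : ℝ) (hc : 0 < c) (hm : 0 ≤ m)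
    (hfX : ∀ x ∈ V, c < fderiv ℝ f x (X x))
    (hhX : ∀ x ∈ V, c < fderiv ℝ h x (X x))
    (hαX : ∀ x ∈ V, |fderiv ℝ α x (X x)| ≤ m)
    (hfh : ∀ x ∈ V, m * |f x - h x| < c / 2) :
    ∀ x ∈ V,
      DifferentiableAt ℝ (fun y => α y * f y + (1 - α y) * h y) x ∧
      c / 2 < fderiv ℝ (fun y => α y * f y + (1 - α y) * h y) x (X x) := by
  intro x hx
  have Hf := (hf x hx).hasFDerivAt
  have Hh := (hh x hx).hasFDerivAt
  have Hα := (hα x hx).hasFDerivAt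
  have Hg : HasFDerivAt (fun y => α y * f y + (1 - α y) * h y)
      ((α x • fderiv ℝ f x + f x • fderiv ℝ α x) +
        ((1 - α x) • fderiv ℝ h x + h x • (-fderiv ℝ α x))) x :=
    (Hα.mul Hf).add ((Hα.const_sub 1).mul Hh)
  refine ⟨Hg.differentiableAt, ?_⟩
  rw [Hg.fderiv]
  simp only [ContinuousLinearMap.add_apply, ContinuousLinearMap.smul_apply,
    ContinuousLinearMap.neg_apply, smul_eq_mul]
  obtain ⟨h0, h1⟩ := hα01 x hx
  have hfx := hfX x hx
  have hhx := hhX x hx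
  have haX := abs_le.1 (hαX x hx)
  have hfh' := hfh x hx
  have e1 : f x - h x ≤ |f x - h x| := le_abs_self _
  have e2 : -|f x - h x| ≤ f x - h x := neg_abs_le _
  nlinarith [mul_nonneg h0 (sub_nonneg.2 hfx.le),
    mul_nonneg (sub_nonneg.2 h1) (sub_nonneg.2 hhx.le),
    abs_nonneg (f x - h x),
    mul_le_mul_of_nonneg_left haX.2 (abs_nonneg (f x - h x)),
    mul_le_mul_of_nonneg_left haX.1 (abs_nonneg (f x - h x))]
end

section
/- Let 0 < ε < 1/2 and let γ : ℝ → ℝ be a strictly increasing bijection such that γ(t) ≥ t for all t, with equality γ(t) = t holding if and only if t ≥ 1 − 2ε or t ≤ −1 + ε. Define ζ : ℝ → ℝ by ζ(t) := −γ⁻¹(−γ(t)). Then ζ(t) ≥ t for all t, and ζ(t) = t if and only if t ≤ −1 + ε or t ≥ 1 − ε. -/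
/-- Properties (a), (iii), (iv) in the proof of Lemma 5.3 combined: if `γ` is a
strictly increasing bijection of `ℝ` with `γ t ≥ t`, with equality exactly when
`t ≥ 1 - 2ε` or `t ≤ -1 + ε`, then `ζ t := -γ⁻¹(-(γ t))` satisfies `ζ t ≥ t`
with equality exactly when `t ≤ -1 + ε` or `t ≥ 1 - ε`. -/
theorem commutator_with_involution_fixed_set
    (ε : ℝ) (hε0 : 0 < ε) (hε : ε < 1 / 2)
    (γ : ℝ ≃ ℝ) (hmono : StrictMono γ)
    (hge : ∀ t : ℝ, t ≤ γ t)
    (hfix : ∀ t : ℝ, γ t = t ↔ 1 - 2 * ε ≤ t ∨ t ≤ -1 + ε) :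
    (∀ t : ℝ, t ≤ -γ.symm (-(γ t))) ∧
    (∀ t : ℝ, -γ.symm (-(γ t)) = t ↔ t ≤ -1 + ε ∨ 1 - ε ≤ t) := by
  have hsymm : ∀ s : ℝ, γ.symm s ≤ s := fun s => by
    have := hge (γ.symm s); simpa using this
  constructor
  · intro t
    have h1 : γ.symm (-(γ t)) ≤ -(γ t) := hsymm _
    have h2 : -(γ t) ≤ -t := by linarith [hge t]
    linarith
  · intro t
    constructor
    · intro h
      have heq : γ.symm (-(γ t)) = -t := by linarith
      have hγ : γ (-t) = -(γ t) := (γ.symm_apply_eq.mp heq).symm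
      have h1 : t ≤ γ t := hge t
      have h2 : -t ≤ γ (-t) := hge (-t)
      have hγt : γ t = t := by linarith
      have hγnt : γ (-t) = -t := by rw [hγ, hγt]
      rcases (hfix t).mp hγt with c1 | c1
      · rcases (hfix (-t)).mp hγnt with c2 | c2
        · linarith
        · right; linarith
      · left; exact c1
    · intro h
      have hγt : γ t = t := (hfix t).mpr (by
        rcases h with h | h
        · exact Or.inr h
        · exact Or.inl (by linarith))
      have hγnt : γ (-t) = -t := (hfix (-t)).mpr (by
        rcases h with h | h
        · exact Or.inl (by linarith)
        · exact Or.inr (by linarith))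
      have hs : γ.symm (-(γ t)) = -t := by
        rw [hγt]; exact γ.symm_apply_eq.mpr hγnt.symm
      linarith
end
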